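/- Fix an integer N ≥ 2, γ ∈ ℝ and λ ∈ ℂ^N, and let j ∈ {1, …, N−1} be such that λ_j ≠ λ_{j+1}. Then for every x ∈ ℝ^N, ψ_λ(s_j x) = ψ_{s_j λ}(x) − (iγ/(λ_j − λ_{j+1})) (ψ_λ(x) − ψ_{s_j λ}(x)), where s_j λ is obtained from λ by exchanging λ_j and λ_{j+1}. -/

import Mathlib

open scoped BigOperators
open MeasureTheory Complex

noncomputable section

abbrev Pt (N : ℕ) := Fin N → ℝ
abbrev Fn (N : ℕ) := Pt N → ℂ

/-- The permutation `w` acting on points: `(w • x) j = x (w⁻¹ j)`. -/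
def permPt {N : ℕ} (w : Equiv.Perm (Fin N)) (x : Pt N) : Pt N := fun j => x (w⁻¹ j)

/-- The fundamental (positive) alcove `ℝ^N_+ = {x : x_1 > … > x_N}`. -/
def posAlcove (N : ℕ) : Set (Pt N) := {x | ∀ i j : Fin N, i < j → x j < x i}

/-- The alcove `w⁻¹ ℝ^N_+`. -/
def alcove {N : ℕ} (w : Equiv.Perm (Fin N)) : Set (Pt N) := {x | permPt w x ∈ posAlcove N}

/-- Regular vectors: pairwise distinct coordinates. -/
def regPts (N : ℕ) : Set (Pt N) := {x | ∀ i j : Fin N, i ≠ j → x i ≠ x j}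

/-- Partial derivative in the `j`-th coordinate. -/
def pd {N : ℕ} (j : Fin N) (f : Fn N) : Fn N :=
  fun x => deriv (fun t : ℝ => f (Function.update x j t)) (x j)

/-- The plane wave `e^{iλ}`. -/
def planeWave {N : ℕ} (lam : Fin N → ℂ) : Fn N :=
  fun x => Complex.exp (Complex.I * ∑ j, lam j * (x j : ℂ))

/-- The integral operator `I_{jk}`:
`(I_{jk} f)(x) = ∫_0^{x_j-x_k} f(x - y(e_j - e_k)) dy`. -/
def Iop {N : ℕ} (j k : Fin N) (f : Fn N) : Fn N :=
  fun x => ∫ y in (0:ℝ)..(x j - x k),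
    f (Function.update (Function.update x j (x j - y)) k (x k + y))

/-- The integral-reflection operator `s^γ` associated to the transposition `(j k)`. -/
def sIR {N : ℕ} (γ : ℝ) (j k : Fin N) (f : Fn N) : Fn N :=
  fun x => f (permPt (Equiv.swap j k) x) + (γ : ℂ) * Iop j k f x

/-- The integral-reflection operator for the simple transposition `s_j = (j, j+1)`
(zero-based); identity for out-of-range `j`. -/
def sSimple {N : ℕ} (γ : ℝ) (j : ℕ) (f : Fn N) : Fn N :=
  if h : j + 1 < N then sIR γ ⟨j, Nat.lt_of_succ_lt h⟩ ⟨j + 1, h⟩ f else f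

/-- `w^γ` computed from a word `L` of simple reflections:
`wordOp γ [i₁,…,i_l] f = s_{i₁}^γ (⋯ (s_{i_l}^γ f))`. -/
def wordOp {N : ℕ} (γ : ℝ) (L : List ℕ) (f : Fn N) : Fn N :=
  L.foldr (fun j g => sSimple γ j g) f

/-- The simple transposition `s_j` (zero-based); identity for out-of-range `j`. -/
def simpleT (N : ℕ) (j : ℕ) : Equiv.Perm (Fin N) :=
  if h : j + 1 < N then Equiv.swap ⟨j, Nat.lt_of_succ_lt h⟩ ⟨j + 1, h⟩ else 1

/-- The permutation represented by a word of simple reflections. -/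
def wordPerm (N : ℕ) (L : List ℕ) : Equiv.Perm (Fin N) := (L.map (simpleT N)).prod

/-- `P` is the propagation operator `P^γ_N`: for continuous `f`, `P f` is continuous and
on the alcove `w⁻¹ ℝ^N_+` it equals `(w^γ f)(w x)`, where `w^γ` may be computed from any
word of simple reflections representing `w` (the operators `s_j^γ` satisfy the relations
of the symmetric group, so this does not depend on the word). -/
def IsPropagation {N : ℕ} (γ : ℝ) (P : Fn N → Fn N) : Prop :=
  ∀ f : Fn N, Continuous f →
    Continuous (P f) ∧
    ∀ (w : Equiv.Perm (Fin N)) (L : List ℕ),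
      (∀ j ∈ L, j + 1 < N) → wordPerm N L = w →
      ∀ x ∈ alcove w, P f x = wordOp γ L f (permPt w x)

open scoped Classical in
/-- The operator `Λ_j` entering the Dunkl-type operator `∂_j^γ = ∂_j - γ Λ_j`. -/
def LambdaOp {N : ℕ} (j : Fin N) (f : Fn N) : Fn N := fun x =>
  (∑ k : Fin N, if k < j ∧ x k < x j then f (permPt (Equiv.swap j k) x) else 0)
    - ∑ k : Fin N, if j < k ∧ x j < x k then f (permPt (Equiv.swap j k) x) else 0

/-- Membership in `CB^∞(ℝ^N)`: continuous, and smooth on every alcove. -/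
def CBsmooth {N : ℕ} (f : Fn N) : Prop :=
  Continuous f ∧ ∀ w : Equiv.Perm (Fin N), ContDiffOn ℝ (⊤ : ℕ∞) f (alcove w)

/-- Membership in `sol^γ_λ`: lies in `CB^∞(ℝ^N)` and satisfies `∂_j^γ f = iλ_j f`
on the regular vectors for every `j`. -/
def memSol {N : ℕ} (γ : ℝ) (lam : Fin N → ℂ) (f : Fn N) : Prop :=
  CBsmooth f ∧ ∀ j : Fin N, ∀ x ∈ regPts N,
    pd j f x - (γ : ℂ) * LambdaOp j f x = Complex.I * lam j * f x

open scoped Classical in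
/-- Coxeter length = number of inversions. -/
def invCount {N : ℕ} (w : Equiv.Perm (Fin N)) : ℕ :=
  (Finset.univ.filter fun p : Fin N × Fin N => p.1 < p.2 ∧ w p.2 < w p.1).card

/-- `x + δ(e_j - e_k)`. -/
def jumpShift {N : ℕ} (j k : Fin N) (δ : ℝ) (x : Pt N) : Pt N :=
  Function.update (Function.update x j (x j + δ)) k (x k - δ)

/-- The derivative jump conditions with coupling `γ`: at every subregular point of
every wall `{x_j = x_k}` (`j < k`), the jump of `(∂_j - ∂_k) f` equals `2γ f(x)`. -/
def SatisfiesJump {N : ℕ} (γ : ℝ) (f : Fn N) : Prop :=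
  ∀ j k : Fin N, j < k → ∀ x : Pt N, x j = x k →
    (∀ l m : Fin N, l < m → ¬(l = j ∧ m = k) → x l ≠ x m) →
    Filter.Tendsto
      (fun δ : ℝ =>
        (pd j f (jumpShift j k δ x) - pd k f (jumpShift j k δ x))
          - (pd j f (jumpShift j k (-δ) x) - pd k f (jumpShift j k (-δ) x)))
      (nhdsWithin 0 (Set.Ioi 0)) (nhds (2 * (γ : ℂ) * f x))

open scoped Classical in
/-- Indicator of a strictly decreasing chain of real numbers. -/
def chainInd (l : List ℝ) : ℂ := if List.Chain' (fun a b => b < a) l then 1 else 0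

/-- Iterated integral entering `ê⁻_{μ;i}`: for the list `[i₁,…,i_n]`, the upper limit of
the `y_m`-integral is `x_{i_{m-1}}` (threaded through `ub`, starting at `x_{N+1}`), the lower
limit is `x_{i_m}`, and the coordinate `i_m` of the argument is replaced by `y_m`. -/
def eMinusAux {N : ℕ} (μ : ℂ) (f : Fn N) (x : Pt (N + 1)) :
    List (Fin N) → ℝ → Pt N → ℂ
  | [], _, z => f z
  | i :: rest, ub, z =>
      ∫ y in (x i.castSucc)..ub,
        Complex.exp (Complex.I * μ * ((x i.castSucc - y : ℝ) : ℂ)) *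
          eMinusAux μ f x rest (x i.castSucc) (Function.update z i y)

/-- The elementary creation operator `ê⁻_{μ;i}`. -/
def ehatMinus {N : ℕ} (μ : ℂ) (l : List (Fin N)) (f : Fn N) : Fn (N + 1) :=
  fun x =>
    chainInd (x (Fin.last N) :: l.map fun i => x i.castSucc) *
      Complex.exp (Complex.I * μ * ((x (Fin.last N) : ℝ) : ℂ)) *
      eMinusAux μ f x l (x (Fin.last N)) (fun j => x j.castSucc)

/-- Iterated integral entering `ê⁺_{μ;i}`: the lower limit of the `y_m`-integral is
`x_{i_{m+1}+1}` (the coordinate of the next entry, or `x_1` at the end), the upper limit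
is `x_{i_m+1}`, and the coordinate `i_m` of the argument is replaced by `y_m`. -/
def ePlusAux {N : ℕ} (μ : ℂ) (f : Fn N) (x : Pt (N + 1)) :
    List (Fin N) → Pt N → ℂ
  | [], z => f z
  | i :: rest, z =>
      ∫ y in (match rest with
              | [] => x 0
              | j :: _ => x j.succ)..(x i.succ),
        Complex.exp (Complex.I * μ * ((x i.succ - y : ℝ) : ℂ)) *
          ePlusAux μ f x rest (Function.update z i y)

/-- The elementary creation operator `ê⁺_{μ;i}`. -/
def ehatPlus {N : ℕ} (μ : ℂ) (l : List (Fin N)) (f : Fn N) : Fn (N + 1) :=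
  fun x =>
    chainInd ((l.map fun i => x i.succ) ++ [x 0]) *
      Complex.exp (Complex.I * μ * ((x 0 : ℝ) : ℂ)) *
      ePlusAux μ f x l (fun j => x j.succ)

/-- The non-symmetric creation operator
`b⁻_μ = ∑_{n=0}^N γⁿ ∑_{i ∈ 𝔦ⁿ_{[1,N]}} ê⁻_{μ;i}` (tuples of pairwise distinct indices
are encoded as injections `Fin n ↪ Fin N`). -/
def bMinus {N : ℕ} (γ : ℝ) (μ : ℂ) (f : Fn N) : Fn (N + 1) :=
  fun x => ∑ n ∈ Finset.range (N + 1), (γ : ℂ) ^ n *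
    ∑ e : Fin n ↪ Fin N, ehatMinus μ (List.ofFn ⇑e) f x

/-- The non-symmetric creation operator `b⁺_μ`. -/
def bPlus {N : ℕ} (γ : ℝ) (μ : ℂ) (f : Fn N) : Fn (N + 1) :=
  fun x => ∑ n ∈ Finset.range (N + 1), (γ : ℂ) ^ n *
    ∑ e : Fin n ↪ Fin N, ehatPlus μ (List.ofFn ⇑e) f x

/-- `φ̌⁺`: evaluate the first coordinate at `x⁺`. -/
def phiCheckPlus {k : ℕ} (xp : ℝ) (f : Fn (k + 1)) : Fn k := fun x => f (Fin.cons xp x)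

/-- `φ̌⁻`: evaluate the last coordinate at `x⁻`. -/
def phiCheckMinus {k : ℕ} (xm : ℝ) (f : Fn (k + 1)) : Fn k := fun x => f (Fin.snoc x xm)

/-- `b^ε_μ`, `ε = +` encoded as `true` and `ε = -` as `false`. -/
def bEps (ε : Bool) {k : ℕ} (γ : ℝ) (μ : ℂ) (f : Fn k) : Fn (k + 1) :=
  if ε then bPlus γ μ f else bMinus γ μ f

/-- `ê^ε_{μ;i}`. -/
def ehatEps (ε : Bool) {N : ℕ} (μ : ℂ) (l : List (Fin N)) (f : Fn N) : Fn (N + 1) :=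
  if ε then ehatPlus μ l f else ehatMinus μ l f

/-- `φ̌^ε`. -/
def phiEps (ε : Bool) {k : ℕ} (xp xm : ℝ) (f : Fn (k + 1)) : Fn k :=
  if ε then phiCheckPlus xp f else phiCheckMinus xm f

/-- `a^ε_μ = φ̌^ε ∘ b^ε_μ`. -/
def aEps (ε : Bool) {k : ℕ} (γ : ℝ) (xp xm : ℝ) (μ : ℂ) (f : Fn k) : Fn k :=
  phiEps ε xp xm (bEps ε γ μ f)

/-- The sign `ε = ±1` of `ε ∈ {+,-}`. -/
def sgn (ε : Bool) : ℂ := if ε then 1 else -1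

/-- `s⁺` (swap of the first two coordinates of `ℝ^{N+2}`) resp. `s⁻` (swap of the last two). -/
def sEps (ε : Bool) (N : ℕ) : Equiv.Perm (Fin (N + 2)) :=
  if ε then Equiv.swap 0 1 else Equiv.swap ⟨N, by omega⟩ ⟨N + 1, by omega⟩

/-- Iterated integral entering `č⁺_{μ;i}` (the variables `y_1,…,y_n`). -/
def cAuxPlus {N : ℕ} (μ : ℂ) (xp : ℝ) (x : Pt N) (g : Pt N → ℂ) :
    List (Fin N) → Pt N → ℂ
  | [], z => g z
  | i :: rest, z =>
      ∫ y in (match rest with | [] => xp | j :: _ => x j)..(x i),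
        Complex.exp (Complex.I * μ * ((x i - y : ℝ) : ℂ)) *
          cAuxPlus μ xp x g rest (Function.update z i y)

/-- The elementary operator `č⁺_{μ;i}` (with `x_{i_0} := x⁻` and `x_{i_{n+1}} := x⁺`;
the variable `y_0` is plugged in as the final argument of `f`). -/
def cCheckPlus {N : ℕ} (μ : ℂ) (xp xm : ℝ) (l : List (Fin N)) (f : Fn (N + 1)) : Fn N :=
  fun x =>
    chainInd (l.map x) * Complex.exp (Complex.I * μ * ((xp : ℝ) : ℂ)) *
      ∫ y0 in (match l with | [] => xp | i :: _ => x i)..xm,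
        Complex.exp (Complex.I * μ * ((xm - y0 : ℝ) : ℂ)) *
          cAuxPlus μ xp x (fun z => f (Fin.snoc z y0)) l x

/-- Iterated integral entering `č⁻_{μ;i}` (the variables `y_1,…,y_{n+1}`;
the variable `y_{n+1}` is plugged in as the first argument of `f`). -/
def cAuxMinus {N : ℕ} (μ : ℂ) (xp : ℝ) (x : Pt N) (f : Fn (N + 1)) :
    List (Fin N) → ℝ → Pt N → ℂ
  | [], ub, z =>
      ∫ y in xp..ub, Complex.exp (Complex.I * μ * ((xp - y : ℝ) : ℂ)) * f (Fin.cons y z)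
  | i :: rest, ub, z =>
      ∫ y in (x i)..ub,
        Complex.exp (Complex.I * μ * ((x i - y : ℝ) : ℂ)) *
          cAuxMinus μ xp x f rest (x i) (Function.update z i y)

/-- The elementary operator `č⁻_{μ;i}` (with `x_{i_0} := x⁻` and `x_{i_{n+1}} := x⁺`). -/
def cCheckMinus {N : ℕ} (μ : ℂ) (xp xm : ℝ) (l : List (Fin N)) (f : Fn (N + 1)) : Fn N :=
  fun x => chainInd (l.map x) * Complex.exp (Complex.I * μ * ((xm : ℝ) : ℂ)) *
    cAuxMinus μ xp x f l xm x

/-- `č^ε_{μ;i}`. -/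
def cCheckEps (ε : Bool) {N : ℕ} (μ : ℂ) (xp xm : ℝ) (l : List (Fin N)) (f : Fn (N + 1)) :
    Fn N :=
  if ε then cCheckPlus μ xp xm l f else cCheckMinus μ xp xm l f

/-- The operator `c⁺_μ = ∑_{n=0}^N γ^{n+1} ∑_i č⁺_{μ;i}`. -/
def cPlusOp {N : ℕ} (γ : ℝ) (μ : ℂ) (xp xm : ℝ) (f : Fn (N + 1)) : Fn N :=
  fun x => ∑ n ∈ Finset.range (N + 1), (γ : ℂ) ^ (n + 1) *
    ∑ e : Fin n ↪ Fin N, cCheckPlus μ xp xm (List.ofFn ⇑e) f x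

/-- The operator `c⁻_μ = ∑_{n=0}^N γ^{n+1} ∑_i č⁻_{μ;i}`. -/
def cMinusOp {N : ℕ} (γ : ℝ) (μ : ℂ) (xp xm : ℝ) (f : Fn (N + 1)) : Fn N :=
  fun x => ∑ n ∈ Finset.range (N + 1), (γ : ℂ) ^ (n + 1) *
    ∑ e : Fin n ↪ Fin N, cCheckMinus μ xp xm (List.ofFn ⇑e) f x

/-- `c^ε_μ`. -/
def cEps (ε : Bool) {N : ℕ} (γ : ℝ) (μ : ℂ) (xp xm : ℝ) (f : Fn (N + 1)) : Fn N :=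
  if ε then cPlusOp γ μ xp xm f else cMinusOp γ μ xp xm f

/-- The closed box `J^M = [x⁺,x⁻]^M`. -/
def box (M : ℕ) (xp xm : ℝ) : Set (Pt M) := {x | ∀ j, x j ∈ Set.Icc xp xm}

/-- The `L²(J^M)` inner product `⟨u,v⟩_M = ∫_{J^M} u · conj v`. -/
def ipJ {M : ℕ} (xp xm : ℝ) (u v : Fn M) : ℂ :=
  ∫ x in box M xp xm, u x * (starRingEnd ℂ) (v x)

/-- Smooth functions compactly supported in the open box `(x⁺,x⁻)^M`. -/
def IsTestFn {M : ℕ} (xp xm : ℝ) (f : Fn M) : Prop :=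
  ContDiff ℝ (⊤ : ℕ∞) f ∧ HasCompactSupport f ∧ ∀ x, f x ≠ 0 → ∀ j, x j ∈ Set.Ioo xp xm

/-- The symmetrizer `𝒮_N = (1/N!) ∑_{w ∈ S_N} w`. -/
def symN (N : ℕ) (f : Fn N) : Fn N :=
  fun x => (N.factorial : ℂ)⁻¹ * ∑ w : Equiv.Perm (Fin N), f (permPt w⁻¹ x)

open scoped Classical in
/-- `G^γ_μ = ∏_{j<k} (μ_j - μ_k - iγ)/(μ_j - μ_k)`. -/
def Gcoef {N : ℕ} (γ : ℝ) (mu : Fin N → ℂ) : ℂ :=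
  ∏ p ∈ Finset.univ.filter (fun p : Fin N × Fin N => p.1 < p.2),
    (mu p.1 - mu p.2 - Complex.I * (γ : ℂ)) / (mu p.1 - mu p.2)

/-- The decreasing rearrangement `x↓`. -/
def decRearrange {N : ℕ} (x : Pt N) : Pt N := fun j => x (Tuple.sort x (Fin.rev j))

/-- The Bethe wavefunction
`Ψ_λ(x) = (1/N!) ∑_{w ∈ S_N} G^γ_{wλ} exp(i ∑_j (wλ)_j (x↓)_j)`. -/
def Bethe {N : ℕ} (γ : ℝ) (lam : Fin N → ℂ) : Fn N :=
  fun x => (N.factorial : ℂ)⁻¹ * ∑ w : Equiv.Perm (Fin N),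
    Gcoef γ (fun j => lam (w⁻¹ j)) *
      Complex.exp (Complex.I * ∑ j, lam (w⁻¹ j) * ((decRearrange x j : ℝ) : ℂ))

/-- The transpositions of consecutive entries of a list:
`adjSwaps [a₁,…,a_m] = [(a₁ a₂), (a₂ a₃), …, (a_{m-1} a_m)]`. -/
def adjSwaps {M : ℕ} : List (Fin M) → List (Equiv.Perm (Fin M))
  | [] => []
  | [_] => []
  | a :: b :: rest => Equiv.swap a b :: adjSwaps (b :: rest)

/-- `b⁻_{λ_N} (b⁻_{λ_{N-1}} (⋯ (b⁻_{λ_1} 1)))`. -/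
def iterBMinus (γ : ℝ) : (N : ℕ) → (Fin N → ℂ) → Fn N
  | 0, _ => fun _ => 1
  | N + 1, lam => bMinus γ (lam (Fin.last N)) (iterBMinus γ N (fun j => lam j.castSucc))

/-- `b⁺_{λ_1} (b⁺_{λ_2} (⋯ (b⁺_{λ_N} 1)))`. -/
def iterBPlus (γ : ℝ) : (N : ℕ) → (Fin N → ℂ) → Fn N
  | 0, _ => fun _ => 1
  | N + 1, lam => bPlus γ (lam 0) (iterBPlus γ N (fun j => lam j.succ))

/-! On the alcove `w⁻¹ ℝ^N_+` one has `P f (s_j x) = (w s_j)^γ f (w x) = w^γ (s_j^γ f) (w x)`,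
so `P f ∘ s_j = P (s_j^γ f)` on the regular set, hence everywhere by continuity and density.
Integrating along the segment from `x` to `s_j x` gives
`s_j^γ e^{iλ} = (1 + c) e^{i s_j λ} - c e^{iλ}` with `c = iγ / (λ_j - λ_{j+1})`,
and `P` is linear on continuous functions. -/

section Propagation

variable {N : ℕ}

lemma permPt_mul (u v : Equiv.Perm (Fin N)) (x : Pt N) :
    permPt (u * v) x = permPt u (permPt v x) := by
  funext m
  simp [permPt, Equiv.Perm.mul_apply]

lemma continuous_permPt (w : Equiv.Perm (Fin N)) : Continuous (permPt w) :=
  continuous_pi fun _ => continuous_apply _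

lemma exists_word (w : Equiv.Perm (Fin N)) :
    ∃ L : List ℕ, (∀ j ∈ L, j + 1 < N) ∧ wordPerm N L = w := by
  cases N with
  | zero => exact ⟨[], by simp, Subsingleton.elim _ _⟩
  | succ n =>
    have hw : w ∈ Submonoid.closure
        (Set.range fun i : Fin n => Equiv.swap i.castSucc i.succ) := by
      rw [Equiv.Perm.mclosure_swap_castSucc_succ]; trivial
    induction hw using Submonoid.closure_induction with
    | mem _ h =>
      obtain ⟨i, rfl⟩ := h
      exact ⟨[i], by simp, by simp [wordPerm, simpleT]; rfl⟩
    | one => exact ⟨[], by simp, rfl⟩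
    | mul _ _ _ _ h₁ h₂ =>
      obtain ⟨L₁, hL₁, rfl⟩ := h₁
      obtain ⟨L₂, hL₂, rfl⟩ := h₂
      refine ⟨L₁ ++ L₂, fun j hj => ?_, by simp [wordPerm]⟩
      rcases List.mem_append.mp hj with hj | hj
      exacts [hL₁ j hj, hL₂ j hj]

lemma exists_alcove {x : Pt N} (hx : x ∈ regPts N) : ∃ w, x ∈ alcove w := by
  have hinj : Function.Injective x := fun i j h => by_contra fun hij => hx i j hij h
  have hsm : StrictMono (x ∘ Tuple.sort x) :=
    (Tuple.monotone_sort x).strictMono_of_injective (hinj.comp (Tuple.sort x).injective)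
  refine ⟨(Fin.revPerm.trans (Tuple.sort x))⁻¹, fun i j hij => ?_⟩
  simpa [permPt] using hsm (Fin.rev_lt_rev.mpr hij)

lemma exists_word_mem_alcove {x : Pt N} (hx : x ∈ regPts N) :
    ∃ L : List ℕ, (∀ j ∈ L, j + 1 < N) ∧ x ∈ alcove (wordPerm N L) := by
  obtain ⟨w, hw⟩ := exists_alcove hx
  obtain ⟨L, hL, rfl⟩ := exists_word w
  exact ⟨L, hL, hw⟩

lemma dense_coord_ne {i j : Fin N} (hij : i ≠ j) : Dense {x : Pt N | x i ≠ x j} := by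
  let V : Submodule ℝ (Pt N) :=
    LinearMap.ker (LinearMap.proj (R := ℝ) (φ := fun _ : Fin N => ℝ) i - LinearMap.proj j)
  have hV : (V : Set (Pt N))ᶜ = {x | x i ≠ x j} := by
    ext x; simp [V, sub_eq_zero]
  rw [← hV, ← interior_eq_empty_iff_dense_compl, ← Set.not_nonempty_iff_eq_empty]
  intro hint
  have hsingle : (Pi.single i 1 : Pt N) ∈ V := by
    rw [Submodule.eq_top_of_nonempty_interior' V hint]; trivial
  simp [V, hij.symm] at hsingle

lemma dense_regPts : Dense (regPts N) := by
  have h : regPts N =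
      ⋂ p : {p : Fin N × Fin N // p.1 ≠ p.2}, {x : Pt N | x p.1.1 ≠ x p.1.2} := by
    ext x; simp [regPts]
  rw [h]
  exact dense_iInter_of_isOpen (fun p => isOpen_ne_fun (continuous_apply _) (continuous_apply _))
    (fun p => dense_coord_ne p.2)

lemma continuous_planeWave (lam : Fin N → ℂ) : Continuous (planeWave lam) := by
  unfold planeWave; fun_prop

lemma planeWave_add (lam : Fin N → ℂ) (x v : Pt N) :
    planeWave lam (x + v) = planeWave lam x * planeWave lam v := by
  simp only [planeWave, ← Complex.exp_add, Pi.add_apply, Complex.ofReal_add, mul_add,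
    Finset.sum_add_distrib]

lemma planeWave_single_sub_single (lam : Fin N → ℂ) (a b : Fin N) (y : ℝ) :
    planeWave lam (Pi.single b y - Pi.single a y)
      = Complex.exp (-(Complex.I * (lam a - lam b)) * y) := by
  simp only [planeWave, Pi.sub_apply, Complex.ofReal_sub, mul_sub, Finset.sum_sub_distrib]
  congr 1
  simp [Pi.single_apply, apply_ite Complex.ofReal]
  ring

lemma planeWave_permPt (lam : Fin N → ℂ) (w : Equiv.Perm (Fin N)) (x : Pt N) :
    planeWave lam (permPt w x) = planeWave (lam ∘ w) x := by
  simp only [planeWave, permPt]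
  rw [← Equiv.sum_comp w]
  simp

lemma update_update_sub_add {a b : Fin N} (hab : a ≠ b) (x : Pt N) (y : ℝ) :
    Function.update (Function.update x a (x a - y)) b (x b + y)
      = x + (Pi.single b y - Pi.single a y) := by
  funext m
  rcases eq_or_ne m b with rfl | hb
  · simp [hab.symm]
  rcases eq_or_ne m a with rfl | ha
  · simp [hb, sub_eq_add_neg]
  · simp [ha, hb]

lemma permPt_swap_eq_update {a b : Fin N} (hab : a ≠ b) (x : Pt N) :
    permPt (Equiv.swap a b) x
      = Function.update (Function.update x a (x a - (x a - x b))) b (x b + (x a - x b)) := by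
  funext m
  rcases eq_or_ne m b with rfl | hb
  · simp [permPt]
  rcases eq_or_ne m a with rfl | ha
  · simp [permPt, hb]
  · simp [permPt, Equiv.swap_apply_of_ne_of_ne ha hb, ha, hb]

lemma planeWave_comp_swap {a b : Fin N} (hab : a ≠ b) (lam : Fin N → ℂ) (x : Pt N) :
    planeWave (lam ∘ Equiv.swap a b) x
      = planeWave lam x * Complex.exp (-(Complex.I * (lam a - lam b)) * (x a - x b : ℝ)) := by
  rw [← planeWave_permPt, permPt_swap_eq_update hab, update_update_sub_add hab, planeWave_add,
    planeWave_single_sub_single]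

lemma Iop_planeWave {a b : Fin N} (hab : a ≠ b) {lam : Fin N → ℂ} (hne : lam a ≠ lam b)
    (x : Pt N) :
    Iop a b (planeWave lam) x
      = planeWave lam x * ((Complex.exp (-(Complex.I * (lam a - lam b)) * (x a - x b : ℝ)) - 1)
        / (-(Complex.I * (lam a - lam b)))) := by
  have hc : -(Complex.I * (lam a - lam b)) ≠ 0 := by
    simp [Complex.I_ne_zero, sub_ne_zero.mpr hne]
  simp only [Iop, update_update_sub_add hab, planeWave_add, planeWave_single_sub_single,
    intervalIntegral.integral_const_mul, integral_exp_mul_complex hc]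
  simp

lemma sIR_planeWave {a b : Fin N} (hab : a ≠ b) (γ : ℝ) {lam : Fin N → ℂ}
    (hne : lam a ≠ lam b) :
    sIR γ a b (planeWave lam)
      = (1 + Complex.I * γ / (lam a - lam b)) • planeWave (lam ∘ Equiv.swap a b)
        - (Complex.I * γ / (lam a - lam b)) • planeWave lam := by
  funext x
  have hI : (-(Complex.I * (lam a - lam b)))⁻¹ = Complex.I * (lam a - lam b)⁻¹ := by
    rw [inv_neg, mul_inv, Complex.inv_I]; ring
  simp only [sIR, planeWave_permPt, Iop_planeWave hab hne, planeWave_comp_swap hab, Pi.sub_apply,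
    Pi.smul_apply, smul_eq_mul, div_eq_mul_inv, hI]
  ring

lemma continuous_Iop (j k : Fin N) {f : Fn N} (hf : Continuous f) : Continuous (Iop j k f) :=
  intervalIntegral.continuous_parametric_intervalIntegral_of_continuous
    (f := fun x y => f (Function.update (Function.update x j (x j - y)) k (x k + y)))
    (hf.comp (by fun_prop : Continuous fun p : Pt N × ℝ =>
      Function.update (Function.update p.1 j (p.1 j - p.2)) k (p.1 k + p.2))) (by fun_prop)

lemma continuous_sSimple (γ : ℝ) (j : ℕ) {f : Fn N} (hf : Continuous f) :
    Continuous (sSimple γ j f) := by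
  unfold sSimple sIR
  split
  · exact (hf.comp (continuous_permPt _)).add (continuous_const.mul (continuous_Iop _ _ hf))
  · exact hf

lemma continuous_wordOp (γ : ℝ) (L : List ℕ) {f : Fn N} (hf : Continuous f) :
    Continuous (wordOp γ L f) := by
  induction L with
  | nil => exact hf
  | cons i L ih => exact continuous_sSimple γ i ih

lemma Iop_smul_add_smul (j k : Fin N) (a b : ℂ) {f g : Fn N} (hf : Continuous f)
    (hg : Continuous g) :
    Iop j k (a • f + b • g) = a • Iop j k f + b • Iop j k g := by
  funext x
  have hint : ∀ {h : Fn N}, Continuous h → IntervalIntegrable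
      (fun y => h (Function.update (Function.update x j (x j - y)) k (x k + y)))
      volume 0 (x j - x k) := fun hh =>
    (hh.comp (by fun_prop : Continuous fun y : ℝ =>
      Function.update (Function.update x j (x j - y)) k (x k + y))).intervalIntegrable _ _
  simp only [Iop, Pi.add_apply, Pi.smul_apply, smul_eq_mul]
  rw [intervalIntegral.integral_add ((hint hf).const_mul a) ((hint hg).const_mul b),
    intervalIntegral.integral_const_mul, intervalIntegral.integral_const_mul]

lemma sSimple_smul_add_smul (γ : ℝ) (j : ℕ) (a b : ℂ) {f g : Fn N} (hf : Continuous f)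
    (hg : Continuous g) :
    sSimple γ j (a • f + b • g) = a • sSimple γ j f + b • sSimple γ j g := by
  unfold sSimple
  split
  · funext x
    simp only [sIR, Iop_smul_add_smul _ _ a b hf hg, Pi.add_apply, Pi.smul_apply, smul_eq_mul]
    ring
  · rfl

lemma wordOp_smul_add_smul (γ : ℝ) (L : List ℕ) (a b : ℂ) {f g : Fn N} (hf : Continuous f)
    (hg : Continuous g) :
    wordOp γ L (a • f + b • g) = a • wordOp γ L f + b • wordOp γ L g := by
  induction L with
  | nil => rfl
  | cons i L ih =>
    exact (congrArg (sSimple γ i) ih).trans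
      (sSimple_smul_add_smul γ i a b (continuous_wordOp γ L hf) (continuous_wordOp γ L hg))

namespace IsPropagation

variable {γ : ℝ} {P : Fn N → Fn N}

lemma map_smul_add_smul (hP : IsPropagation γ P) (a b : ℂ) {f g : Fn N} (hf : Continuous f)
    (hg : Continuous g) :
    P (a • f + b • g) = a • P f + b • P g := by
  have hfg : Continuous (a • f + b • g) := (hf.const_smul a).add (hg.const_smul b)
  refine Continuous.ext_on dense_regPts (hP _ hfg).1
    (((hP f hf).1.const_smul a).add ((hP g hg).1.const_smul b)) fun x hx => ?_
  obtain ⟨L, hL, hx⟩ := exists_word_mem_alcove hx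
  simp only [Pi.add_apply, Pi.smul_apply, (hP _ hfg).2 _ L hL rfl x hx, (hP f hf).2 _ L hL rfl x hx,
    (hP g hg).2 _ L hL rfl x hx, wordOp_smul_add_smul γ L a b hf hg]

lemma apply_permPt_swap (hP : IsPropagation γ P) {f : Fn N} (hf : Continuous f) {j : ℕ}
    (hj : j + 1 < N) (x : Pt N) :
    P f (permPt (Equiv.swap ⟨j, Nat.lt_of_succ_lt hj⟩ ⟨j + 1, hj⟩) x)
      = P (sSimple γ j f) x := by
  set s := Equiv.swap (⟨j, Nat.lt_of_succ_lt hj⟩ : Fin N) ⟨j + 1, hj⟩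
  have hs : simpleT N j = s := dif_pos hj
  revert x
  rw [← funext_iff]
  refine Continuous.ext_on dense_regPts ((hP f hf).1.comp (continuous_permPt s))
    (hP _ (continuous_sSimple γ j hf)).1 fun x hx => ?_
  obtain ⟨L, hL, hx⟩ := exists_word_mem_alcove hx
  have hsx : permPt (wordPerm N L * s) (permPt s x) = permPt (wordPerm N L) x := by
    rw [permPt_mul, ← permPt_mul s, Equiv.swap_mul_self, ← permPt_mul, mul_one]
  have hword : wordPerm N (L ++ [j]) = wordPerm N L * s := by
    simp [wordPerm, hs]
  have hL' : ∀ i ∈ L ++ [j], i + 1 < N := by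
    simpa [or_imp, forall_and] using ⟨hL, hj⟩
  have hsx_mem : permPt s x ∈ alcove (wordPerm N L * s) := by
    simpa [alcove, hsx] using hx
  rw [(hP f hf).2 _ _ hL' hword _ hsx_mem, hsx,
    (hP _ (continuous_sSimple γ j hf)).2 _ L hL rfl x hx]
  simp [wordOp, List.foldr_append]

end IsPropagation

end Propagation

theorem statement_5_general (N : ℕ) (γ : ℝ) (lam : Fin N → ℂ)
    (P : Fn N → Fn N) (hP : IsPropagation γ P)
    (j : ℕ) (hj : j + 1 < N)
    (hne : lam ⟨j, Nat.lt_of_succ_lt hj⟩ ≠ lam ⟨j + 1, hj⟩) (x : Pt N) :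
    P (planeWave lam)
        (permPt (Equiv.swap ⟨j, Nat.lt_of_succ_lt hj⟩ ⟨j + 1, hj⟩) x)
      = P (planeWave (lam ∘ (Equiv.swap ⟨j, Nat.lt_of_succ_lt hj⟩ ⟨j + 1, hj⟩))) x
        - Complex.I * (γ : ℂ) / (lam ⟨j, Nat.lt_of_succ_lt hj⟩ - lam ⟨j + 1, hj⟩) *
          (P (planeWave lam) x
            - P (planeWave (lam ∘ (Equiv.swap ⟨j, Nat.lt_of_succ_lt hj⟩ ⟨j + 1, hj⟩))) x) := by
  set c := Complex.I * (γ : ℂ) / (lam ⟨j, Nat.lt_of_succ_lt hj⟩ - lam ⟨j + 1, hj⟩)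
  have hab : (⟨j, Nat.lt_of_succ_lt hj⟩ : Fin N) ≠ ⟨j + 1, hj⟩ := by simp
  have hsimple : sSimple γ j (planeWave lam)
      = (1 + c) • planeWave (lam ∘ Equiv.swap ⟨j, Nat.lt_of_succ_lt hj⟩ ⟨j + 1, hj⟩)
        + (-c) • planeWave lam := by
    rw [neg_smul, ← sub_eq_add_neg, sSimple, dif_pos hj, sIR_planeWave hab γ hne]
  rw [hP.apply_permPt_swap (continuous_planeWave lam) hj, hsimple,
    hP.map_smul_add_smul _ _ (continuous_planeWave _) (continuous_planeWave lam)]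
  simp only [Pi.add_apply, Pi.smul_apply, smul_eq_mul]
  ring

/-- for `λ_j ≠ λ_{j+1}` (zero-based: entries `j` and `j+1`),
`ψ_λ(s_j x) = ψ_{s_j λ}(x) - (iγ/(λ_j - λ_{j+1})) (ψ_λ(x) - ψ_{s_j λ}(x))`. -/
theorem statement_5 (N : ℕ) (hN : 2 ≤ N) (γ : ℝ) (lam : Fin N → ℂ)
    (P : Fn N → Fn N) (hP : IsPropagation γ P)
    (j : ℕ) (hj : j + 1 < N)
    (hne : lam ⟨j, Nat.lt_of_succ_lt hj⟩ ≠ lam ⟨j + 1, hj⟩) (x : Pt N) :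
    P (planeWave lam)
        (permPt (Equiv.swap ⟨j, Nat.lt_of_succ_lt hj⟩ ⟨j + 1, hj⟩) x)
      = P (planeWave (lam ∘ (Equiv.swap ⟨j, Nat.lt_of_succ_lt hj⟩ ⟨j + 1, hj⟩))) x
        - Complex.I * (γ : ℂ) / (lam ⟨j, Nat.lt_of_succ_lt hj⟩ - lam ⟨j + 1, hj⟩) *
          (P (planeWave lam) x
            - P (planeWave (lam ∘ (Equiv.swap ⟨j, Nat.lt_of_succ_lt hj⟩ ⟨j + 1, hj⟩))) x) :=
  statement_5_general N γ lam P hP j hj hne x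

end
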